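/- Let p ∈ ℝ, r₂ > 0 and σ ∈ (-π/2, 0), and let L = { (r·cos(θ), p + r·sin(θ)) : r ≥ 0, σ ≤ θ ≤ π - σ } ⊆ ℝ². Then the distance from the point (0, p - r₂) to the set L equals r₂·cos(σ), i.e. inf{ |(0, p-r₂) - y| : y ∈ L } = r₂·cos(σ). Consequently, if 0 < r₁ < r₂·cos(σ), then L is disjoint from the closed disk {x ∈ ℝ² : |x - (0, p-r₂)| ≤ r₁}. -/
import Mathlib


open Real Set

/-- The point `(a, b) ∈ ℝ²` (Euclidean). -/
noncomputable def pt (a b : ℝ) : EuclideanSpace ℝ (Fin 2) :=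
  (WithLp.equiv 2 (Fin 2 → ℝ)).symm ![a, b]

lemma dist_pt (a b c d : ℝ) :
    dist (pt a b) (pt c d) = Real.sqrt ((a - c) ^ 2 + (b - d) ^ 2) := by
  simp [EuclideanSpace.dist_eq, pt, Fin.sum_univ_two, Real.dist_eq, sq_abs]

/-- The distance from `(0, p - r₂)` to the closed sector
`L = {(r cos θ, p + r sin θ) : r ≥ 0, σ ≤ θ ≤ π - σ}` equals `r₂ cos σ`; consequently,
if `0 < r₁ < r₂ cos σ`, then `L` is disjoint from the closed disk of radius `r₁` about
`(0, p - r₂)`. -/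
theorem stmt13 (p r₂ σ : ℝ) (hr₂ : 0 < r₂) (hσ : σ ∈ Ioo (-(π / 2)) 0)
    (L : Set (EuclideanSpace ℝ (Fin 2)))
    (hL : L = {y | ∃ r θ : ℝ, 0 ≤ r ∧ σ ≤ θ ∧ θ ≤ π - σ ∧
        y = pt (r * Real.cos θ) (p + r * Real.sin θ)}) :
    Metric.infDist (pt 0 (p - r₂)) L = r₂ * Real.cos σ ∧
    ∀ r₁ : ℝ, 0 < r₁ → r₁ < r₂ * Real.cos σ →
      Disjoint L (Metric.closedBall (pt 0 (p - r₂)) r₁) := by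
  obtain ⟨hσ1, hσ2⟩ := hσ
  have hpi := Real.pi_pos
  have hcos : 0 < Real.cos σ := Real.cos_pos_of_mem_Ioo ⟨hσ1, by linarith⟩
  have hsin : Real.sin σ < 0 := Real.sin_neg_of_neg_of_neg_pi_lt hσ2 (by linarith)
  have hsinθ : ∀ θ : ℝ, σ ≤ θ → θ ≤ π - σ → Real.sin σ ≤ Real.sin θ := by
    intro θ h1 h2
    rcases le_total θ (π / 2) with h | h
    · exact Real.strictMonoOn_sin.monotoneOn ⟨hσ1.le, by linarith⟩
        ⟨by linarith, h⟩ h1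
    · rw [← Real.sin_pi_sub θ]
      exact Real.strictMonoOn_sin.monotoneOn ⟨hσ1.le, by linarith⟩
        ⟨by linarith, by linarith⟩ (by linarith)
  have e1 := Real.sin_sq_add_cos_sq σ
  -- lower bound
  have key : ∀ y ∈ L, r₂ * Real.cos σ ≤ dist (pt 0 (p - r₂)) y := by
    rintro y hy
    rw [hL] at hy
    obtain ⟨r, θ, hr, h1, h2, rfl⟩ := hy
    rw [dist_pt]
    have hs := hsinθ θ h1 h2
    have e2 := Real.sin_sq_add_cos_sq θ
    have hexp : (0 - r * Real.cos θ) ^ 2 + (p - r₂ - (p + r * Real.sin θ)) ^ 2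
        = r ^ 2 + 2 * r * r₂ * Real.sin θ + r₂ ^ 2 := by
      linear_combination r ^ 2 * e2
    have hsq : (r₂ * Real.cos σ) ^ 2 ≤
        (0 - r * Real.cos θ) ^ 2 + (p - r₂ - (p + r * Real.sin θ)) ^ 2 := by
      rw [hexp]
      nlinarith [sq_nonneg (r + r₂ * Real.sin σ),
        mul_nonneg (mul_nonneg hr hr₂.le) (sub_nonneg.2 hs)]
    calc r₂ * Real.cos σ = Real.sqrt ((r₂ * Real.cos σ) ^ 2) :=
          (Real.sqrt_sq (by positivity)).symm
      _ ≤ _ := Real.sqrt_le_sqrt hsq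
  -- witness point
  have hy₀ : pt (-r₂ * Real.sin σ * Real.cos σ) (p + -r₂ * Real.sin σ * Real.sin σ) ∈ L := by
    rw [hL]
    exact ⟨-r₂ * Real.sin σ, σ, by nlinarith, le_refl σ, by linarith, rfl⟩
  have hdist₀ : dist (pt 0 (p - r₂))
      (pt (-r₂ * Real.sin σ * Real.cos σ) (p + -r₂ * Real.sin σ * Real.sin σ))
      = r₂ * Real.cos σ := by
    rw [dist_pt]
    have : (0 - -r₂ * Real.sin σ * Real.cos σ) ^ 2 +
        (p - r₂ - (p + -r₂ * Real.sin σ * Real.sin σ)) ^ 2 = (r₂ * Real.cos σ) ^ 2 := by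
      linear_combination (r₂ ^ 2 * (Real.sin σ ^ 2 - 1)) * e1
    rw [this, Real.sqrt_sq (by positivity)]
  have hinf : Metric.infDist (pt 0 (p - r₂)) L = r₂ * Real.cos σ := by
    refine le_antisymm ?_ ?_
    · calc Metric.infDist (pt 0 (p - r₂)) L ≤ _ := Metric.infDist_le_dist_of_mem hy₀
        _ = r₂ * Real.cos σ := hdist₀
    · refine le_of_not_gt fun h => ?_
      obtain ⟨y, hy, hd⟩ := (Metric.infDist_lt_iff ⟨_, hy₀⟩).1 h
      exact absurd hd (not_lt.2 (key y hy))
  refine ⟨hinf, fun r₁ hr₁ hr₁' => Set.disjoint_left.2 fun y hyL hyB => ?_⟩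
  have h1 := key y hyL
  rw [Metric.mem_closedBall, dist_comm] at hyB
  linarith
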